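/- Set λ_α := −4e^{−2γ} and 𝓒_α := 4√π·e^{−γ}, and define Ẑ₂(p) := (i𝓒_α/(4π))·(log p − log(−λ_α) − iπ/2)/(p + iλ_α) for p ≠ 0, p ≠ −iλ_α. Then there exist an open set U ⊆ ℂ containing {p ∈ ℂ : Re(p) ≥ 0, p ≠ 0} and an analytic function G on U such that G(p) = Ẑ₂(p) for every p ∈ U with p ≠ −iλ_α (i.e. the singularity of Ẑ₂ at p = −iλ_α is removable), and G(p) ≠ 0 for every p with Re(p) ≥ 0 and p ≠ 0. -/

import Mathlib

open MeasureTheory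

/-- `λ_α := -4 e^{-2γ}`, with `γ` the Euler–Mascheroni constant. -/
noncomputable def lamAlpha : ℝ := -4 * Real.exp (-2 * Real.eulerMascheroniConstant)

/-- `𝓒_α := 4 √π e^{-γ}`. -/
noncomputable def CAlpha : ℝ := 4 * Real.sqrt Real.pi * Real.exp (-Real.eulerMascheroniConstant)

/-- `Ẑ₂(p) := (i𝓒_α/(4π)) (log p - log(-λ_α) - iπ/2)/(p + iλ_α)`. -/
noncomputable def Zhat2 (p : ℂ) : ℂ :=
  (Complex.I * (CAlpha : ℂ) / (4 * (Real.pi : ℂ))) *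
    ((Complex.log p - Complex.log (-(lamAlpha : ℂ)) - Complex.I * (Real.pi : ℂ) / 2) /
      (p + Complex.I * (lamAlpha : ℂ)))

/-!
Since `λ_α < 0`, the point `p₀ = -iλ_α` lies on the positive imaginary axis and
`log p₀ = log(-λ_α) + iπ/2`, so `Ẑ₂` is a constant multiple of the difference quotient
`(log p - log p₀)/(p - p₀)`. Completed by `log' p₀ = 1/p₀` at `p₀`, this quotient is analytic on
the slit plane, which contains the punctured closed right half-plane. It does not vanish there
because `log` is injective on `ℂ ∖ {0}` and `1/p₀ ≠ 0`.
-/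

open Complex Set
open scoped Real

section DSlope

variable {𝕜 E : Type*} [NontriviallyNormedField 𝕜] [NormedAddCommGroup E] [NormedSpace 𝕜 E]
  {f : 𝕜 → E} {a b : 𝕜}

theorem AnalyticAt.dslope (hf : AnalyticAt 𝕜 f b) : AnalyticAt 𝕜 (_root_.dslope f a) b := by
  rcases eq_or_ne b a with rfl | hne
  · obtain ⟨p, hp⟩ := hf
    exact hp.has_fpower_series_dslope_fslope.analyticAt
  · have hslope : AnalyticAt 𝕜 (fun z => (z - a)⁻¹ • (f z - f a)) b :=
      ((analyticAt_id.sub analyticAt_const).inv (sub_ne_zero.mpr hne)).smul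
        (hf.sub analyticAt_const)
    refine hslope.congr ?_
    filter_upwards [dslope_eventuallyEq_slope_of_ne f hne] with z hz
    rw [hz, slope_def_module]

theorem dslope_ne_zero_of_injOn {s : Set 𝕜} (hf : InjOn f s) (ha : a ∈ s) (hb : b ∈ s)
    (hderiv : deriv f a ≠ 0) : dslope f a b ≠ 0 := by
  rcases eq_or_ne b a with rfl | hne
  · rwa [dslope_same]
  · rw [dslope_of_ne f hne, slope_def_module]
    exact smul_ne_zero (inv_ne_zero (sub_ne_zero.mpr hne))
      (sub_ne_zero.mpr fun h => hne (hf hb ha h))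

end DSlope

namespace Complex

theorem mem_slitPlane_of_re_nonneg {z : ℂ} (hre : 0 ≤ z.re) (hz : z ≠ 0) : z ∈ slitPlane := by
  rcases hre.lt_or_eq with hpos | hzero
  · exact Or.inl hpos
  · exact Or.inr fun him => hz (ext hzero.symm him)

theorem injOn_log : InjOn log {0}ᶜ := fun x hx y hy h => by
  rw [← exp_log hx, ← exp_log hy, h]

theorem log_ofReal_mul_I {r : ℝ} (hr : 0 < r) : log (r * I) = Real.log r + π / 2 * I := by
  rw [log_ofReal_mul hr I_ne_zero, log_I]

end Complex

theorem lamAlpha_neg : lamAlpha < 0 := by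
  have := Real.exp_pos (-2 * Real.eulerMascheroniConstant)
  unfold lamAlpha
  linarith

theorem CAlpha_pos : 0 < CAlpha := by
  unfold CAlpha
  have := Real.sqrt_pos.mpr Real.pi_pos
  positivity

theorem neg_I_mul_lamAlpha_eq : -(I * (lamAlpha : ℂ)) = ((-lamAlpha : ℝ) : ℂ) * I := by
  push_cast
  ring

theorem neg_I_mul_lamAlpha_mem_slitPlane : -(I * (lamAlpha : ℂ)) ∈ slitPlane := by
  rw [neg_I_mul_lamAlpha_eq]
  exact mem_slitPlane_iff.mpr (Or.inr (by simp [lamAlpha_neg.ne]))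

theorem log_neg_I_mul_lamAlpha :
    log (-(I * (lamAlpha : ℂ))) = log (-(lamAlpha : ℂ)) + I * π / 2 := by
  have hr : 0 < -lamAlpha := neg_pos.mpr lamAlpha_neg
  rw [neg_I_mul_lamAlpha_eq, log_ofReal_mul_I hr, ofReal_log hr.le]
  push_cast
  ring

/-- At the pole both sides are the junk value `0`. -/
theorem Zhat2_eq_mul_slope (p : ℂ) :
    Zhat2 p = I * CAlpha / (4 * π) * slope log (-(I * (lamAlpha : ℂ))) p := by
  rw [Zhat2, slope_def_field, log_neg_I_mul_lamAlpha, sub_neg_eq_add]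
  ring

/-- `Ẑ₂` extends analytically to an open set containing the punctured closed right half-plane
(the singularity at `p = -iλ_α` being removable), and the extension does not vanish at any
`p` with `Re p ≥ 0`, `p ≠ 0`. -/
theorem Zhat2_analytic_nonvanishing :
    ∃ U : Set ℂ, ∃ G : ℂ → ℂ,
      IsOpen U ∧
      {p : ℂ | 0 ≤ p.re ∧ p ≠ 0} ⊆ U ∧
      AnalyticOnNhd ℂ G U ∧
      (∀ p ∈ U, p ≠ -(Complex.I * (lamAlpha : ℂ)) → G p = Zhat2 p) ∧
      (∀ p : ℂ, 0 ≤ p.re → p ≠ 0 → G p ≠ 0) := by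
  set p₀ : ℂ := -(I * (lamAlpha : ℂ))
  have hp₀ : p₀ ∈ slitPlane := neg_I_mul_lamAlpha_mem_slitPlane
  have hc : I * (CAlpha : ℂ) / (4 * π) ≠ 0 := by
    simp [CAlpha_pos.ne', Real.pi_ne_zero]
  refine ⟨slitPlane, fun p => I * CAlpha / (4 * π) * dslope log p₀ p, isOpen_slitPlane,
    fun p hp => mem_slitPlane_of_re_nonneg hp.1 hp.2,
    fun p hp => analyticAt_const.mul (analyticAt_clog hp).dslope,
    fun p _ hne => by rw [Zhat2_eq_mul_slope, ← dslope_of_ne _ hne], fun p hre hne => ?_⟩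
  have hderiv : deriv log p₀ ≠ 0 := by
    rw [deriv_log hp₀]
    exact inv_ne_zero (slitPlane_ne_zero hp₀)
  exact mul_ne_zero hc
    (dslope_ne_zero_of_injOn injOn_log (slitPlane_ne_zero hp₀) hne hderiv)
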